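/- Suppose the negated excess loss is (ν², α)-sub-Gamma under P_W ⊗ μ for some ν, α > 0, i.e. log ∫ exp(λ·(R − r)) d(P_W ⊗ μ) ≤ ν²λ²/(2(1 − αλ)) for every λ with 0 < λ < 1/α, and suppose R = ∫ r d(P_W ⊗ μ) > 0. Then for every η with 0 < η ≤ R/(ν² + αR) (note R/(ν² + αR) < 1/α), the (η, 1/2)-central condition holds, i.e. log ∫ exp(−η·r) d(P_W ⊗ μ) ≤ −(η/2)·R, and consequently gen ≤ R̂ + (2/(η·n)) ∑_{i=1}^n I(W;Z_i). -/

import Mathlib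

open MeasureTheory Real

/-- Real-valued Kullback–Leibler divergence `D(P‖Q)`,
the integral of the log-likelihood ratio with respect to `P`. -/
noncomputable def klReal {α : Type*} [MeasurableSpace α] (P Q : Measure α) : ℝ :=
  ∫ x, llr P Q x ∂P

variable {W Z : Type*} [MeasurableSpace W] [MeasurableSpace Z]

/-- Population risk `L(w) = ∫ ℓ(w,z) dμ(z)`. -/
noncomputable def popRisk (μ : Measure Z) (ℓ : W × Z → ℝ) (w : W) : ℝ :=
  ∫ z, ℓ (w, z) ∂μ

/-- Empirical risk `L̂(w,s) = (1/n) ∑ i, ℓ(w, s i)`. -/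
noncomputable def empRisk (n : ℕ) (ℓ : W × Z → ℝ) (w : W) (s : Fin n → Z) : ℝ :=
  (1 / (n : ℝ)) * ∑ i, ℓ (w, s i)

/-- Expected generalization error `gen = E_P[L(W) − L̂(W,S_n)]`. -/
noncomputable def genErr (μ : Measure Z) (n : ℕ) (P : Measure (W × (Fin n → Z)))
    (ℓ : W × Z → ℝ) : ℝ :=
  ∫ p, (popRisk μ ℓ p.1 - empRisk n ℓ p.1 p.2) ∂P

/-- Expected empirical excess risk `R̂ = E_P[L̂(W,S_n) − L̂(w*,S_n)]`. -/
noncomputable def empExcess (n : ℕ) (P : Measure (W × (Fin n → Z)))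
    (ℓ : W × Z → ℝ) (wstar : W) : ℝ :=
  ∫ p, (empRisk n ℓ p.1 p.2 - empRisk n ℓ wstar p.2) ∂P

/-- Expected excess risk `R = ∫ r d(P_W ⊗ μ)` where `r(w,z) = ℓ(w,z) − ℓ(w*,z)`. -/
noncomputable def excessRisk (μ : Measure Z) {n : ℕ} (P : Measure (W × (Fin n → Z)))
    (ℓ : W × Z → ℝ) (wstar : W) : ℝ :=
  ∫ p, (ℓ p - ℓ (wstar, p.2)) ∂((P.map Prod.fst).prod μ)

/-- Joint law `P_i` of `(W, Z_i)`: the pushforward of `P` under `(w,z) ↦ (w, z_i)`. -/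
noncomputable def jointLaw {n : ℕ} (P : Measure (W × (Fin n → Z))) (i : Fin n) :
    Measure (W × Z) :=
  P.map fun p => (p.1, p.2 i)

/-- Mutual information `I(W;Z_i) = D(P_i ‖ P_W ⊗ μ)`. -/
noncomputable def mutInfo (μ : Measure Z) {n : ℕ} (P : Measure (W × (Fin n → Z)))
    (i : Fin n) : ℝ :=
  klReal (jointLaw P i) ((P.map Prod.fst).prod μ)

/-!
Writing `exp (-η r) = exp (-η R) * exp (η (R - r))`, the sub-Gamma bound at `λ = η` gives
`log E exp (-η r) ≤ ν² η² / (2 (1 - α η)) - η R`, and `η (ν² + α R) ≤ R` makes the right side at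
most `-η R / 2`: this is the central condition. Donsker–Varadhan applied to `-η r`, with `P_i`
against `P_W ⊗ μ`, turns it into `η R / 2 ≤ η E_{P_i}[r] + I(W; Z_i)`. Averaging over `i` gives
`R ≤ 2 R̂ + (2 / (η n)) ∑ I(W; Z_i)`, and `gen = R - R̂`.
-/

open ProbabilityTheory InformationTheory

section KullbackLeibler

variable {Ω : Type*} [MeasurableSpace Ω] {P Q : Measure Ω} [IsProbabilityMeasure P]
  [IsProbabilityMeasure Q]

lemma klReal_nonneg (hPQ : P ≪ Q) (hllr : Integrable (llr P Q) P) : 0 ≤ klReal P Q := by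
  simpa [klReal] using integral_llr_add_sub_measure_univ_nonneg hPQ hllr

/-- Donsker–Varadhan: Gibbs' inequality for `P` against the tilted measure `Q.tilted f`. -/
lemma integral_le_klReal_add_log_integral_exp (hPQ : P ≪ Q) (hllr : Integrable (llr P Q) P)
    {f : Ω → ℝ} (hfP : Integrable f P) (hfQ : Integrable (fun x => exp (f x)) Q) :
    ∫ x, f x ∂P ≤ klReal P Q + log (∫ x, exp (f x) ∂Q) := by
  have := isProbabilityMeasure_tilted hfQ
  have hgibbs := klReal_nonneg (hPQ.trans (absolutelyContinuous_tilted hfQ))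
    (integrable_llr_tilted_right hPQ hfP hllr hfQ)
  rw [klReal, integral_llr_tilted_right hPQ hfP hfQ hllr] at hgibbs
  rw [klReal]
  linarith

end KullbackLeibler

section SubGamma

variable {Ω : Type*} [MeasurableSpace Ω] {Q : Measure Ω} {X : Ω → ℝ} {ν a R η : ℝ}

lemma exp_neg_mul_eq_mul_exp_mul_sub (t c x : ℝ) :
    exp (-t * x) = exp (-(t * c)) * exp (t * (c - x)) := by
  rw [← exp_add]
  ring_nf

lemma integrable_exp_neg_mul_of_integrable_exp_mul_sub
    (h : Integrable (fun x => exp (η * (R - X x))) Q) :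
    Integrable (fun x => exp (-η * X x)) Q := by
  simpa only [← exp_neg_mul_eq_mul_exp_mul_sub] using h.const_mul (exp (-(η * R)))

lemma cgf_neg_eq_cgf_const_sub_sub [IsProbabilityMeasure Q]
    (h : Integrable (fun x => exp (η * (R - X x))) Q) :
    cgf X Q (-η) = cgf (fun x => R - X x) Q η - η * R := by
  simp only [cgf, mgf]
  simp_rw [exp_neg_mul_eq_mul_exp_mul_sub η R, integral_const_mul]
  rw [log_mul (exp_pos _).ne' (integral_exp_pos h).ne', log_exp]
  ring

lemma lt_one_div_of_le_div_sq_add (hν : 0 < ν) (ha : 0 < a) (hR : 0 < R)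
    (hη : η ≤ R / (ν ^ 2 + a * R)) : η < 1 / a := by
  refine hη.trans_lt ?_
  rw [div_lt_div_iff₀ (by positivity) ha]
  nlinarith [pow_pos hν 2]

lemma subGamma_bound_le_half_mul (ha : 0 < a) (hR : 0 < R) (hη : 0 < η)
    (hηR : η ≤ R / (ν ^ 2 + a * R)) (hηa : η < 1 / a) :
    ν ^ 2 * η ^ 2 / (2 * (1 - a * η)) ≤ η * R / 2 := by
  have haη : 0 < 1 - a * η := by
    rw [lt_div_iff₀ ha] at hηa
    linarith
  have hηR' : η * (ν ^ 2 + a * R) ≤ R := (le_div_iff₀ (by positivity)).mp hηR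
  rw [div_le_div_iff₀ (by positivity) two_pos]
  nlinarith [mul_le_mul_of_nonneg_left hηR' hη.le]

lemma cgf_neg_le_of_subGamma_bound [IsProbabilityMeasure Q] (ha : 0 < a) (hR : 0 < R)
    (hη : 0 < η) (hηR : η ≤ R / (ν ^ 2 + a * R)) (hηa : η < 1 / a)
    (hint : Integrable (fun x => exp (η * (R - X x))) Q)
    (hsub : cgf (fun x => R - X x) Q η ≤ ν ^ 2 * η ^ 2 / (2 * (1 - a * η))) :
    cgf X Q (-η) ≤ -(η / 2) * R := by
  rw [cgf_neg_eq_cgf_const_sub_sub hint]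
  linarith [subGamma_bound_le_half_mul ha hR hη hηR hηa]

lemma half_mul_le_mul_integral_add_klReal_of_cgf_neg_le {P : Measure Ω} [IsProbabilityMeasure P]
    [IsProbabilityMeasure Q] (hPQ : P ≪ Q) (hllr : Integrable (llr P Q) P) (hXP : Integrable X P)
    (hXQ : Integrable (fun x => exp (-η * X x)) Q) (hcentral : cgf X Q (-η) ≤ -(η / 2) * R) :
    η * R / 2 ≤ η * ∫ x, X x ∂P + klReal P Q := by
  have hDV := integral_le_klReal_add_log_integral_exp hPQ hllr (hXP.const_mul (-η)) hXQ
  rw [integral_const_mul] at hDV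
  change _ ≤ _ + cgf X Q (-η) at hDV
  linarith

end SubGamma

lemma MeasureTheory.MeasurePreserving.integral_comp_of_aestronglyMeasurable {α β : Type*}
    [MeasurableSpace α] [MeasurableSpace β] {ρ : Measure α} {ν : Measure β} {f : α → β}
    (hf : MeasurePreserving f ρ ν) {g : β → ℝ} (hg : AEStronglyMeasurable g ν) :
    ∫ x, g (f x) ∂ρ = ∫ y, g y ∂ν := by
  rw [← hf.map_eq] at hg ⊢
  exact (integral_map hf.measurable.aemeasurable hg).symm

instance isProbabilityMeasure_map_fst {α β : Type*} [MeasurableSpace α] [MeasurableSpace β]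
    (ρ : Measure (α × β)) [IsProbabilityMeasure ρ] : IsProbabilityMeasure (ρ.map Prod.fst) :=
  Measure.isProbabilityMeasure_map measurable_fst.aemeasurable

section Risk

variable {μ : Measure Z} {n : ℕ} {P : Measure (W × (Fin n → Z))} {ℓ : W × Z → ℝ}

lemma measurePreserving_snd_jointLaw [IsProbabilityMeasure μ]
    (hmarg : P.map Prod.snd = Measure.pi fun _ => μ) (i : Fin n) :
    MeasurePreserving Prod.snd (jointLaw P i) μ := by
  refine ⟨measurable_snd, ?_⟩
  rw [jointLaw, Measure.map_map measurable_snd (by fun_prop)]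
  change P.map (Function.eval i ∘ Prod.snd) = μ
  rw [← Measure.map_map (measurable_pi_apply i) measurable_snd, hmarg,
    (measurePreserving_eval _ i).map_eq]

instance isProbabilityMeasure_jointLaw [IsProbabilityMeasure P] (i : Fin n) :
    IsProbabilityMeasure (jointLaw P i) :=
  Measure.isProbabilityMeasure_map (by fun_prop)

lemma integrable_comp_jointLaw {f : W × Z → ℝ} {i : Fin n} (hf : Integrable f (jointLaw P i)) :
    Integrable (fun p => f (p.1, p.2 i)) P :=
  hf.comp_measurable (by fun_prop)

lemma integral_comp_jointLaw {f : W × Z → ℝ} {i : Fin n}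
    (hf : AEStronglyMeasurable f (jointLaw P i)) :
    ∫ p, f (p.1, p.2 i) ∂P = ∫ q, f q ∂(jointLaw P i) :=
  (integral_map (by fun_prop) hf).symm

lemma integrable_empRisk (h : ∀ i, Integrable ℓ (jointLaw P i)) :
    Integrable (fun p => empRisk n ℓ p.1 p.2) P :=
  (integrable_finsetSum _ fun i _ => integrable_comp_jointLaw (h i)).const_mul _

lemma integral_empRisk (h : ∀ i, Integrable ℓ (jointLaw P i)) :
    ∫ p, empRisk n ℓ p.1 p.2 ∂P = 1 / n * ∑ i, ∫ q, ℓ q ∂(jointLaw P i) := by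
  simp only [empRisk]
  rw [integral_const_mul, integral_finsetSum _ fun i _ => integrable_comp_jointLaw (h i)]
  simp only [integral_comp_jointLaw (h _).1]

lemma empExcess_eq_average_integral_jointLaw {wstar : W}
    (h : ∀ i, Integrable (fun q => ℓ q - ℓ (wstar, q.2)) (jointLaw P i)) :
    empExcess n P ℓ wstar = 1 / n * ∑ i, ∫ q, (ℓ q - ℓ (wstar, q.2)) ∂(jointLaw P i) := by
  simp only [empExcess, empRisk, ← mul_sub, ← Finset.sum_sub_distrib]
  exact integral_empRisk h

lemma integrable_comp_snd_jointLaw [IsProbabilityMeasure μ]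
    (hmarg : P.map Prod.snd = Measure.pi fun _ => μ) {g : Z → ℝ} (hg : Integrable g μ)
    (i : Fin n) : Integrable (fun q => g q.2) (jointLaw P i) :=
  (measurePreserving_snd_jointLaw hmarg i).integrable_comp_of_integrable hg

lemma integral_empRisk_const [IsProbabilityMeasure μ] (hn : 0 < n)
    (hmarg : P.map Prod.snd = Measure.pi fun _ => μ) {w : W}
    (hw : Integrable (fun z => ℓ (w, z)) μ) :
    ∫ p, empRisk n ℓ w p.2 ∂P = popRisk μ ℓ w := by
  change ∫ p, empRisk n (fun q => ℓ (w, q.2)) p.1 p.2 ∂P = _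
  rw [integral_empRisk (integrable_comp_snd_jointLaw hmarg hw)]
  simp only [(measurePreserving_snd_jointLaw hmarg _).integral_comp_of_aestronglyMeasurable hw.1,
    Finset.sum_const, Finset.card_univ, Fintype.card_fin, nsmul_eq_mul]
  field_simp
  rfl

lemma integral_popRisk_fst [SFinite μ] [IsFiniteMeasure P]
    (hint : Integrable ℓ ((P.map Prod.fst).prod μ)) :
    ∫ p, popRisk μ ℓ p.1 ∂P = ∫ q, ℓ q ∂((P.map Prod.fst).prod μ) := by
  rw [integral_prod ℓ hint]
  exact (integral_map measurable_fst.aemeasurable hint.integral_prod_left.1).symm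

lemma excessRisk_eq_sub_popRisk [IsProbabilityMeasure μ] [IsProbabilityMeasure P]
    (hint : Integrable ℓ ((P.map Prod.fst).prod μ)) {w : W}
    (hw : Integrable (fun z => ℓ (w, z)) μ) :
    excessRisk μ P ℓ w = ∫ q, ℓ q ∂((P.map Prod.fst).prod μ) - popRisk μ ℓ w := by
  have hsnd : MeasurePreserving Prod.snd ((P.map Prod.fst).prod μ) μ := measurePreserving_snd
  have hw' : Integrable (fun q => ℓ (w, q.2)) ((P.map Prod.fst).prod μ) :=
    hsnd.integrable_comp_of_integrable hw
  rw [excessRisk, integral_sub hint hw',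
    hsnd.integral_comp_of_aestronglyMeasurable hw.1, popRisk]

lemma genErr_eq_excessRisk_sub_empExcess [IsProbabilityMeasure μ] [IsProbabilityMeasure P]
    (hn : 0 < n) (hmarg : P.map Prod.snd = Measure.pi fun _ => μ)
    (hint : Integrable ℓ ((P.map Prod.fst).prod μ)) (hinti : ∀ i, Integrable ℓ (jointLaw P i))
    {wstar : W} (hintw : Integrable (fun z => ℓ (wstar, z)) μ) :
    genErr μ n P ℓ = excessRisk μ P ℓ wstar - empExcess n P ℓ wstar := by
  have hpop : Integrable (fun p => popRisk μ ℓ p.1) P :=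
    hint.integral_prod_left.comp_measurable measurable_fst
  have hemp : Integrable (fun p => empRisk n ℓ p.1 p.2) P := integrable_empRisk hinti
  have hempw : Integrable (fun p => empRisk n ℓ wstar p.2) P :=
    integrable_empRisk (integrable_comp_snd_jointLaw hmarg hintw)
  rw [genErr, empExcess, integral_sub hpop hemp, integral_sub hemp hempw,
    integral_popRisk_fst hint, integral_empRisk_const hn hmarg hintw,
    excessRisk_eq_sub_popRisk hint hintw]
  ring

end Risk

lemma sub_average_le_average_add_of_forall {n : ℕ} (hn : 0 < n) {η R : ℝ} (hη : 0 < η)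
    {a d : Fin n → ℝ} (h : ∀ i, η * R / 2 ≤ η * a i + d i) :
    R - 1 / n * ∑ i, a i ≤ 1 / n * ∑ i, a i + 2 / (η * n) * ∑ i, d i := by
  have hsum := Finset.sum_le_sum fun i (_ : i ∈ Finset.univ) => h i
  rw [Finset.sum_const, Finset.card_univ, Fintype.card_fin, nsmul_eq_mul, Finset.sum_add_distrib,
    ← Finset.mul_sum] at hsum
  have hn' : (0 : ℝ) < n := Nat.cast_pos.mpr hn
  have hR : R = 2 / (η * n) * (n * (η * R / 2)) := by field_simp
  have hrhs : 2 / (η * n) * (η * ∑ i, a i + ∑ i, d i)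
      = 2 * (1 / n * ∑ i, a i) + 2 / (η * n) * ∑ i, d i := by
    field_simp
  have := mul_le_mul_of_nonneg_left hsum (by positivity : (0 : ℝ) ≤ 2 / (η * n))
  linarith

theorem subGamma_central_condition_general
    (μ : Measure Z) [IsProbabilityMeasure μ] (n : ℕ) (hn : 0 < n)
    (P : Measure (W × (Fin n → Z))) [IsProbabilityMeasure P]
    (hmarg : P.map Prod.snd = Measure.pi fun _ : Fin n => μ)
    (ℓ : W × Z → ℝ) (wstar : W)
    (hint : Integrable ℓ ((P.map Prod.fst).prod μ))
    (hinti : ∀ i : Fin n, Integrable ℓ (jointLaw P i))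
    (hintw : Integrable (fun z => ℓ (wstar, z)) μ)
    (hac : ∀ i : Fin n, jointLaw P i ≪ (P.map Prod.fst).prod μ)
    (hIfin : ∀ i : Fin n, Integrable (llr (jointLaw P i) ((P.map Prod.fst).prod μ))
      (jointLaw P i))
    (ν α : ℝ) (hν : 0 < ν) (hα : 0 < α)
    (hR : 0 < excessRisk μ P ℓ wstar)
    (hsubInt : ∀ lam : ℝ, 0 < lam → lam < 1 / α →
      Integrable
        (fun p => Real.exp (lam * (excessRisk μ P ℓ wstar - (ℓ p - ℓ (wstar, p.2)))))
        ((P.map Prod.fst).prod μ))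
    (hsub : ∀ lam : ℝ, 0 < lam → lam < 1 / α →
      Real.log (∫ p, Real.exp (lam * (excessRisk μ P ℓ wstar - (ℓ p - ℓ (wstar, p.2))))
          ∂((P.map Prod.fst).prod μ)) ≤ ν ^ 2 * lam ^ 2 / (2 * (1 - α * lam))) :
    ∀ η : ℝ, 0 < η →
      η ≤ excessRisk μ P ℓ wstar / (ν ^ 2 + α * excessRisk μ P ℓ wstar) →
      Real.log (∫ p, Real.exp (-η * (ℓ p - ℓ (wstar, p.2))) ∂((P.map Prod.fst).prod μ)) ≤
          -(η / 2) * excessRisk μ P ℓ wstar ∧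
      genErr μ n P ℓ ≤
        empExcess n P ℓ wstar + (2 / (η * (n : ℝ))) * ∑ i : Fin n, mutInfo μ P i := by
  intro η hη hηR
  have hηα : η < 1 / α := lt_one_div_of_le_div_sq_add hν hα hR hηR
  have hcentral := cgf_neg_le_of_subGamma_bound hα hR hη hηR hηα (hsubInt η hη hηα)
    (hsub η hη hηα)
  refine ⟨hcentral, ?_⟩
  have hr : ∀ i, Integrable (fun q => ℓ q - ℓ (wstar, q.2)) (jointLaw P i) := fun i =>
    (hinti i).sub (integrable_comp_snd_jointLaw hmarg hintw i)
  have hper : ∀ i, η * excessRisk μ P ℓ wstar / 2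
      ≤ η * ∫ q, (ℓ q - ℓ (wstar, q.2)) ∂(jointLaw P i) + mutInfo μ P i := fun i =>
    half_mul_le_mul_integral_add_klReal_of_cgf_neg_le (hac i) (hIfin i) (hr i)
      (integrable_exp_neg_mul_of_integrable_exp_mul_sub (hsubInt η hη hηα)) hcentral
  rw [genErr_eq_excessRisk_sub_empExcess hn hmarg hint hinti hintw,
    empExcess_eq_average_integral_jointLaw hr]
  exact sub_average_le_average_add_of_forall hn hη hper

theorem subGamma_central_condition
    (μ : Measure Z) [IsProbabilityMeasure μ] (n : ℕ) (hn : 0 < n)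
    (P : Measure (W × (Fin n → Z))) [IsProbabilityMeasure P]
    (hmarg : P.map Prod.snd = Measure.pi fun _ : Fin n => μ)
    (ℓ : W × Z → ℝ) (hℓ : Measurable ℓ) (wstar : W)
    (hint : Integrable ℓ ((P.map Prod.fst).prod μ))
    (hinti : ∀ i : Fin n, Integrable ℓ (jointLaw P i))
    (hintw : Integrable (fun z => ℓ (wstar, z)) μ)
    (hac : ∀ i : Fin n, jointLaw P i ≪ (P.map Prod.fst).prod μ)
    (hIfin : ∀ i : Fin n, Integrable (llr (jointLaw P i) ((P.map Prod.fst).prod μ))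
      (jointLaw P i))
    (ν α : ℝ) (hν : 0 < ν) (hα : 0 < α)
    (hR : 0 < excessRisk μ P ℓ wstar)
    (hsubInt : ∀ lam : ℝ, 0 < lam → lam < 1 / α →
      Integrable
        (fun p => Real.exp (lam * (excessRisk μ P ℓ wstar - (ℓ p - ℓ (wstar, p.2)))))
        ((P.map Prod.fst).prod μ))
    (hsub : ∀ lam : ℝ, 0 < lam → lam < 1 / α →
      Real.log (∫ p, Real.exp (lam * (excessRisk μ P ℓ wstar - (ℓ p - ℓ (wstar, p.2))))
          ∂((P.map Prod.fst).prod μ)) ≤ ν ^ 2 * lam ^ 2 / (2 * (1 - α * lam))) :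
    ∀ η : ℝ, 0 < η →
      η ≤ excessRisk μ P ℓ wstar / (ν ^ 2 + α * excessRisk μ P ℓ wstar) →
      Real.log (∫ p, Real.exp (-η * (ℓ p - ℓ (wstar, p.2))) ∂((P.map Prod.fst).prod μ)) ≤
          -(η / 2) * excessRisk μ P ℓ wstar ∧
      genErr μ n P ℓ ≤
        empExcess n P ℓ wstar + (2 / (η * (n : ℝ))) * ∑ i : Fin n, mutInfo μ P i :=
  subGamma_central_condition_general μ n hn P hmarg ℓ wstar hint hinti hintw hac hIfin ν α hν hα hR
    hsubInt hsub
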